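/- For every integer k ≥ 3, the generating functions for Primc-coloured partitions satisfy, in the ring of formal power series in q over ℤ[a,c,d]: (1 − c q^k) G_{k_d}(q;a,c,d) = ((1 − c q^{2k})/(1 − q^k)) G_{(k−1)_d}(q;a,c,d) + ((a q^k + d q^k + a d q^{2k})/(1 − q^{k−1})) G_{(k−2)_d}(q;a,c,d) + (a d q^{2k−1}/(1 − q^{k−2})) G_{(k−3)_d}(q;a,c,d), where division by 1 − q^j (j ≥ 1) denotes multiplication by its inverse in the formal power series ring, and with the convention G_{0_d} = 1. -/

import Mathlib

/-- The four colours of Primc's identity. -/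
inductive PrimcColor : Type
  | a | b | c | d
  deriving DecidableEq

open PrimcColor

/-- The difference matrix B: B(x,y) is the minimal difference between a part of colour x
and the following part of colour y. -/
def matB : PrimcColor → PrimcColor → ℕ
  | a, a => 2 | a, b => 1 | a, c => 2 | a, d => 2
  | b, a => 1 | b, b => 0 | b, c => 1 | b, d => 1
  | c, a => 0 | c, b => 1 | c, c => 0 | c, d => 2
  | d, a => 0 | d, b => 1 | d, c => 0 | d, d => 2

/-- A Primc-coloured partition: a finite sequence of coloured positive integers
satisfying the difference conditions of the matrix B. -/
def IsPrimcPartition (l : List (ℕ × PrimcColor)) : Prop :=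
  (∀ p ∈ l, 0 < p.1) ∧ l.Chain' (fun p q => q.1 + matB p.2 q.2 ≤ p.1)

/-- The rank of the coloured integer k_x in the total order
1_a < 1_b < 1_c < 1_d < 2_a < 2_b < 2_c < 2_d < ⋯. -/
def primcRank (k : ℕ) (x : PrimcColor) : ℕ :=
  4 * k + (match x with | a => 0 | b => 1 | c => 2 | d => 3)

/-- The coefficient ring ℤ[a,c,d]: a is the variable of index 0, c of index 1,
d of index 2. -/
abbrev PrimcRing : Type := MvPolynomial (Fin 3) ℤ

/-- The generating function G_{k_x}(q;a,c,d) for Primc-coloured partitions with largest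
part at most k_x, as a formal power series in q over ℤ[a,c,d]: the coefficient of q^n is
Σ A'(n;i,j,t) a^i c^j d^t where A'(n;i,j,t) is the number of Primc-coloured partitions
of n with i parts coloured a, j parts coloured c, t parts coloured d, all parts being at
most k_x (note G_{0_d} = 1 since no coloured positive integer is ≤ 0_d). -/
noncomputable def primcG (k : ℕ) (x : PrimcColor) : PowerSeries PrimcRing :=
  PowerSeries.mk fun n =>
    ∑ i ∈ Finset.range (n + 1), ∑ j ∈ Finset.range (n + 1), ∑ t ∈ Finset.range (n + 1),
      (Nat.card {lam : List (ℕ × PrimcColor) // IsPrimcPartition lam ∧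
          (∀ p ∈ lam, primcRank p.1 p.2 ≤ primcRank k x) ∧
          (lam.map Prod.fst).sum = n ∧
          lam.countP (fun p => decide (p.2 = a)) = i ∧
          lam.countP (fun p => decide (p.2 = c)) = j ∧
          lam.countP (fun p => decide (p.2 = d)) = t} : PrimcRing) *
        (MvPolynomial.X 0 ^ i * MvPolynomial.X 1 ^ j * MvPolynomial.X 2 ^ t)

/-- The generating function E_{k_x}(q;a,c,d) for Primc-coloured partitions whose largest
part is exactly k_x (the largest part being the first one, as the difference conditions
force the parts to be non-increasing in the order on coloured integers). -/
noncomputable def primcE (k : ℕ) (x : PrimcColor) : PowerSeries PrimcRing :=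
  PowerSeries.mk fun n =>
    ∑ i ∈ Finset.range (n + 1), ∑ j ∈ Finset.range (n + 1), ∑ t ∈ Finset.range (n + 1),
      (Nat.card {lam : List (ℕ × PrimcColor) // IsPrimcPartition lam ∧
          lam.head? = some (k, x) ∧
          (lam.map Prod.fst).sum = n ∧
          lam.countP (fun p => decide (p.2 = a)) = i ∧
          lam.countP (fun p => decide (p.2 = c)) = j ∧
          lam.countP (fun p => decide (p.2 = d)) = t} : PrimcRing) *
        (MvPolynomial.X 0 ^ i * MvPolynomial.X 1 ^ j * MvPolynomial.X 2 ^ t)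

/-!
Removing the largest part k_x of a partition gives E_{k_x} = x q^k H_{k_x}, where H_{k_x} is the
series of partitions that may follow k_x; reading off row x of B, each H_{k_x} is a G plus some
E's. Row b gives H_{(k+1)_b} = G_{k_d} + E_{(k+1)_b} = G_{k_d} + q^{k+1} H_{(k+1)_b}, hence
H_{(k+1)_b} = G_{k_d}/(1 - q^{k+1}); row a is row b shifted by one, so H_{(k+2)_a} = H_{(k+1)_b};
rows c and d coincide. Splitting G_{k_d} by the colour of its largest part, and G_{k_c} through
H_{k_d}, gives two linear relations between the G_{j_d} and the H_{j_d}; eliminating H_{k_d} and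
H_{(k-1)_d} from them yields the q-difference equation.
-/

open PowerSeries

lemma PowerSeries.one_sub_X_pow_mul_invOfUnit {R : Type*} [CommRing R] {j : ℕ} (hj : 0 < j) :
    (1 - X ^ j : R⟦X⟧) * invOfUnit (1 - X ^ j) 1 = 1 :=
  mul_invOfUnit _ 1 (by simp [zero_pow hj.ne'])

lemma PowerSeries.eq_invOfUnit_mul_of_eq_add_X_pow_mul {R : Type*} [CommRing R] {j : ℕ}
    (hj : 0 < j) {f g : R⟦X⟧} (h : f = g + X ^ j * f) : f = invOfUnit (1 - X ^ j) 1 * g := by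
  linear_combination (invOfUnit (1 - X ^ j) 1) * h - f * one_sub_X_pow_mul_invOfUnit (R := R) hj

instance : Fintype PrimcColor := ⟨{a, b, c, d}, by rintro (_ | _ | _ | _) <;> simp⟩

lemma isPrimcPartition_iff {l : List (ℕ × PrimcColor)} :
    IsPrimcPartition l ↔ (∀ p ∈ l, 0 < p.1) ∧ l.IsChain fun p q => q.1 + matB p.2 q.2 ≤ p.1 :=
  Iff.rfl

lemma isPrimcPartition_cons {k : ℕ} {x : PrimcColor} {l : List (ℕ × PrimcColor)} :
    IsPrimcPartition ((k, x) :: l) ↔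
      0 < k ∧ (∀ p ∈ l.head?, p.1 + matB x p.2 ≤ k) ∧ IsPrimcPartition l := by
  simp only [isPrimcPartition_iff, List.mem_cons, forall_eq_or_imp, List.isChain_cons]
  tauto

lemma length_le_sum_of_pos {l : List (ℕ × PrimcColor)} (hpos : ∀ p ∈ l, 0 < p.1) :
    l.length ≤ (l.map Prod.fst).sum := by
  simpa using List.length_le_sum_of_one_le (l.map Prod.fst) fun i hi => by
    obtain ⟨p, hp, rfl⟩ := List.mem_map.1 hi; exact hpos p hp

lemma primcRank_le_of_add_matB_le {p q : ℕ × PrimcColor} (h : q.1 + matB p.2 q.2 ≤ p.1) :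
    primcRank q.1 q.2 ≤ primcRank p.1 p.2 := by
  obtain ⟨v, x⟩ := p; obtain ⟨w, y⟩ := q
  cases x <;> cases y <;> simp_all [matB, primcRank] <;> omega

lemma primcRank_injective : Function.Injective fun p : ℕ × PrimcColor => primcRank p.1 p.2 := by
  rintro ⟨v, x⟩ ⟨w, y⟩ h
  cases x <;> cases y <;> simp_all [primcRank] <;> omega

lemma IsPrimcPartition.pairwise_primcRank_le {l : List (ℕ × PrimcColor)}
    (hl : IsPrimcPartition l) :
    l.Pairwise fun p q => primcRank q.1 q.2 ≤ primcRank p.1 p.2 :=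
  have : IsTrans (ℕ × PrimcColor) fun p q => primcRank q.1 q.2 ≤ primcRank p.1 p.2 :=
    ⟨fun _ _ _ h₁ h₂ => h₂.trans h₁⟩
  List.isChain_iff_pairwise.1 <|
    (isPrimcPartition_iff.1 hl).2.imp fun _ _ => primcRank_le_of_add_matB_le

lemma IsPrimcPartition.forall_primcRank_le_iff {l : List (ℕ × PrimcColor)}
    (hl : IsPrimcPartition l) (r : ℕ) :
    (∀ p ∈ l, primcRank p.1 p.2 ≤ r) ↔ ∀ p ∈ l.head?, primcRank p.1 p.2 ≤ r := by
  cases l with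
  | nil => simp
  | cons p l =>
    have := (List.pairwise_cons.1 hl.pairwise_primcRank_le).1
    simp only [List.mem_cons, forall_eq_or_imp, List.head?_cons, Option.mem_def,
      Option.some.injEq, forall_eq']
    exact ⟨And.left, fun h => ⟨h, fun q hq => (this q hq).trans h⟩⟩

lemma finite_setOf_sum_eq (n : ℕ) :
    {l : List (ℕ × PrimcColor) | (∀ p ∈ l, 0 < p.1) ∧ (l.map Prod.fst).sum = n}.Finite := by
  have hS : {p : ℕ × PrimcColor | p.1 ≤ n}.Finite :=
    ((Set.finite_Iic n).prod Set.finite_univ).subset fun p hp => by simpa using hp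
  have := hS.to_subtype
  refine ((List.finite_length_le {p : ℕ × PrimcColor | p.1 ≤ n} n).image
    (List.map Subtype.val)).subset ?_
  rintro l ⟨hpos, hsum⟩
  have hlen := hsum ▸ length_le_sum_of_pos hpos
  lift l to List {p : ℕ × PrimcColor | p.1 ≤ n} using fun p hp =>
    show p.1 ≤ n from hsum ▸ List.le_sum_of_mem (List.mem_map_of_mem hp)
  exact ⟨l, show l.length ≤ n by simpa using hlen, rfl⟩

noncomputable def primcPartitions (Q : List (ℕ × PrimcColor) → Prop) (n : ℕ) :
    Finset (List (ℕ × PrimcColor)) :=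
  ((finite_setOf_sum_eq n).subset fun _ h => ⟨h.1.1, h.2.2⟩ :
    {l | IsPrimcPartition l ∧ Q l ∧ (l.map Prod.fst).sum = n}.Finite).toFinset

@[simp]
lemma mem_primcPartitions {Q : List (ℕ × PrimcColor) → Prop} {n : ℕ} {l : List (ℕ × PrimcColor)} :
    l ∈ primcPartitions Q n ↔ IsPrimcPartition l ∧ Q l ∧ (l.map Prod.fst).sum = n :=
  Set.Finite.mem_toFinset _

noncomputable def primcWeight (l : List (ℕ × PrimcColor)) : PrimcRing :=
  MvPolynomial.X 0 ^ l.countP (fun p => decide (p.2 = a)) *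
    MvPolynomial.X 1 ^ l.countP (fun p => decide (p.2 = c)) *
    MvPolynomial.X 2 ^ l.countP (fun p => decide (p.2 = d))

-- `primcG` and `primcE` are instances of this shape by definition.
noncomputable def primcSeries (Q : List (ℕ × PrimcColor) → Prop) : PowerSeries PrimcRing :=
  PowerSeries.mk fun n =>
    ∑ i ∈ Finset.range (n + 1), ∑ j ∈ Finset.range (n + 1), ∑ t ∈ Finset.range (n + 1),
      (Nat.card {lam : List (ℕ × PrimcColor) // IsPrimcPartition lam ∧
          Q lam ∧
          (lam.map Prod.fst).sum = n ∧
          lam.countP (fun p => decide (p.2 = a)) = i ∧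
          lam.countP (fun p => decide (p.2 = c)) = j ∧
          lam.countP (fun p => decide (p.2 = d)) = t} : PrimcRing) *
        (MvPolynomial.X 0 ^ i * MvPolynomial.X 1 ^ j * MvPolynomial.X 2 ^ t)

lemma coeff_primcSeries (Q : List (ℕ × PrimcColor) → Prop) (n : ℕ) :
    coeff n (primcSeries Q) = ∑ l ∈ primcPartitions Q n, primcWeight l := by
  classical
  set counts : List (ℕ × PrimcColor) → ℕ × ℕ × ℕ := fun l =>
    (l.countP (fun p => decide (p.2 = a)), l.countP (fun p => decide (p.2 = c)),
      l.countP (fun p => decide (p.2 = d)))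
  have hcounts : ∀ l ∈ primcPartitions Q n,
      counts l ∈ Finset.range (n + 1) ×ˢ Finset.range (n + 1) ×ˢ Finset.range (n + 1) := by
    intro l hl
    obtain ⟨⟨hpos, -⟩, -, hsum⟩ := mem_primcPartitions.1 hl
    have hlen := hsum ▸ length_le_sum_of_pos hpos
    simp only [counts, Finset.mem_product, Finset.mem_range]
    refine ⟨?_, ?_, ?_⟩ <;> exact Nat.lt_succ_of_le (List.countP_le_length.trans hlen)
  refine Eq.trans ?_ (Finset.sum_fiberwise_of_maps_to' hcounts
    fun ijt => MvPolynomial.X 0 ^ ijt.1 * MvPolynomial.X 1 ^ ijt.2.1 * MvPolynomial.X 2 ^ ijt.2.2)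
  simp only [primcSeries, coeff_mk, Finset.sum_product, Finset.sum_const, nsmul_eq_mul]
  refine Finset.sum_congr rfl fun i _ => Finset.sum_congr rfl fun j _ =>
    Finset.sum_congr rfl fun t _ => ?_
  rw [← Nat.card_eq_finsetCard]
  congr 4
  ext l
  simp [counts, and_assoc]

lemma primcSeries_eq_add {Q Q₁ Q₂ : List (ℕ × PrimcColor) → Prop}
    (hQ : ∀ l, IsPrimcPartition l → (Q l ↔ Q₁ l ∨ Q₂ l))
    (hdisj : ∀ l, IsPrimcPartition l → Q₁ l → ¬ Q₂ l) :
    primcSeries Q = primcSeries Q₁ + primcSeries Q₂ := by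
  refine PowerSeries.ext fun n => ?_
  rw [map_add, coeff_primcSeries, coeff_primcSeries, coeff_primcSeries,
    ← Finset.sum_union (f := primcWeight) (Finset.disjoint_left.2 fun l h₁ h₂ =>
      hdisj l (mem_primcPartitions.1 h₁).1 (mem_primcPartitions.1 h₁).2.1
        (mem_primcPartitions.1 h₂).2.1)]
  refine Finset.sum_congr (Finset.ext fun l => ?_) fun _ _ => rfl
  simp only [mem_primcPartitions, Finset.mem_union]
  grind

lemma primcSeries_congr {Q Q' : List (ℕ × PrimcColor) → Prop}
    (h : ∀ l, IsPrimcPartition l → (Q l ↔ Q' l)) : primcSeries Q = primcSeries Q' := by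
  refine PowerSeries.ext fun n => ?_
  rw [coeff_primcSeries, coeff_primcSeries]
  refine Finset.sum_congr (Finset.ext fun l => ?_) fun _ _ => rfl
  simp only [mem_primcPartitions]
  grind

noncomputable def primcHeadSeries (P : ℕ × PrimcColor → Prop) : PowerSeries PrimcRing :=
  primcSeries fun l => ∀ p ∈ l.head?, P p

lemma primcHeadSeries_eq_add_primcE {P P' : ℕ × PrimcColor → Prop} {k : ℕ} {x : PrimcColor}
    (hP' : ∀ p, P' p ↔ P p ∨ p = (k, x)) (hkx : ¬ P (k, x)) :
    primcHeadSeries P' = primcHeadSeries P + primcE k x :=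
  primcSeries_eq_add (fun l _ => by cases l <;> simp [hP'])
    (fun l _ h₁ h₂ => by cases l <;> simp_all)

lemma primcG_eq_primcHeadSeries (k : ℕ) (x : PrimcColor) :
    primcG k x = primcHeadSeries fun p => primcRank p.1 p.2 ≤ primcRank k x :=
  primcSeries_congr fun _ hl => hl.forall_primcRank_le_iff _

lemma primcG_eq_add_primcE {k k' : ℕ} {x x' : PrimcColor}
    (h : primcRank k' x' + 1 = primcRank k x) : primcG k x = primcG k' x' + primcE k x := by
  rw [primcG_eq_primcHeadSeries, primcG_eq_primcHeadSeries]
  refine primcHeadSeries_eq_add_primcE (fun p => ?_) (by simp [← h])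
  have := @primcRank_injective p (k, x)
  grind

noncomputable def colourWeight : PrimcColor → PrimcRing
  | a => MvPolynomial.X 0
  | b => 1
  | c => MvPolynomial.X 1
  | d => MvPolynomial.X 2

lemma primcWeight_cons (k : ℕ) (x : PrimcColor) (l : List (ℕ × PrimcColor)) :
    primcWeight ((k, x) :: l) = colourWeight x * primcWeight l := by
  cases x <;> simp [primcWeight, colourWeight, pow_succ] <;> ring

-- H_{k_x}: the partitions whose first part may follow the part k_x.
noncomputable def primcTailSeries (k : ℕ) (x : PrimcColor) : PowerSeries PrimcRing :=
  primcHeadSeries fun p => p.1 + matB x p.2 ≤ k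

lemma primcPartitions_head_eq_map_cons {k n : ℕ} (x : PrimcColor) (hk : 0 < k) (hkn : k ≤ n) :
    primcPartitions (fun l => l.head? = some (k, x)) n =
      (primcPartitions (fun l => ∀ p ∈ l.head?, p.1 + matB x p.2 ≤ k) (n - k)).map
        ⟨List.cons (k, x), List.cons_injective⟩ := by
  ext l
  cases l with
  | nil => simp
  | cons p l =>
    simp only [mem_primcPartitions, Finset.mem_map, Function.Embedding.coeFn_mk,
      List.cons.injEq, List.head?_cons, Option.some.injEq]
    constructor
    · rintro ⟨hl, rfl, hsum⟩
      obtain ⟨-, hhead, hl⟩ := isPrimcPartition_cons.1 hl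
      refine ⟨l, ⟨hl, hhead, ?_⟩, rfl, rfl⟩
      simp only [List.map_cons, List.sum_cons] at hsum
      omega
    · rintro ⟨l, ⟨hl, hhead, hsum⟩, rfl, rfl⟩
      refine ⟨isPrimcPartition_cons.2 ⟨hk, hhead, hl⟩, rfl, ?_⟩
      simp only [List.map_cons, List.sum_cons]
      omega

lemma primcE_eq_C_mul_X_pow_mul (k : ℕ) (x : PrimcColor) (hk : 0 < k) :
    primcE k x = C (colourWeight x) * X ^ k * primcTailSeries k x := by
  refine PowerSeries.ext fun n => ?_
  rw [mul_assoc, coeff_C_mul, coeff_X_pow_mul']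
  change coeff n (primcSeries _) = _
  rw [coeff_primcSeries]
  split_ifs with hkn
  · rw [primcTailSeries, primcHeadSeries, coeff_primcSeries, Finset.mul_sum,
      primcPartitions_head_eq_map_cons x hk hkn, Finset.sum_map]
    simp [primcWeight_cons]
  · refine (Finset.sum_eq_zero fun l hl => absurd ?_ hkn).trans (mul_zero _).symm
    obtain ⟨-, hhead, rfl⟩ := mem_primcPartitions.1 hl
    exact List.le_sum_of_mem (List.mem_map_of_mem (f := Prod.fst) (List.mem_of_mem_head? hhead))

lemma primcTailSeries_b (k : ℕ) : primcTailSeries (k + 1) b = primcG k d + primcE (k + 1) b := by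
  rw [primcTailSeries, primcG_eq_primcHeadSeries]
  refine primcHeadSeries_eq_add_primcE (fun ⟨v, y⟩ => ?_) (by simp [primcRank]; omega)
  cases y <;> simp [matB, primcRank] <;> omega

lemma primcTailSeries_b_eq_invOfUnit_mul (k : ℕ) :
    primcTailSeries (k + 1) b = invOfUnit (1 - X ^ (k + 1)) 1 * primcG k d := by
  have hE : primcE (k + 1) b = X ^ (k + 1) * primcTailSeries (k + 1) b := by
    simpa [colourWeight] using primcE_eq_C_mul_X_pow_mul (k + 1) b k.succ_pos
  exact eq_invOfUnit_mul_of_eq_add_X_pow_mul k.succ_pos (hE ▸ primcTailSeries_b k)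

lemma primcTailSeries_a (k : ℕ) : primcTailSeries (k + 2) a = primcTailSeries (k + 1) b := by
  unfold primcTailSeries
  congr 1
  ext ⟨v, y⟩
  cases y <;> simp only [matB] <;> omega

lemma primcTailSeries_c (k : ℕ) : primcTailSeries k c = primcTailSeries k d := by
  unfold primcTailSeries
  congr
  funext ⟨v, y⟩
  cases y <;> rfl

lemma primcG_succ_c_eq (k : ℕ) :
    primcG (k + 1) c = primcTailSeries (k + 1) d + primcE (k + 1) b + primcE k d := by
  rw [primcTailSeries, primcG_eq_primcHeadSeries,
    ← primcHeadSeries_eq_add_primcE (P' := fun p => p.1 + matB d p.2 ≤ k + 1 ∨ p = (k + 1, b))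
      (fun _ => Iff.rfl) (by simp [matB]),
    ← primcHeadSeries_eq_add_primcE (fun p => Iff.rfl) (by simp [matB])]
  congr
  funext ⟨v, y⟩
  cases y <;> simp [matB, primcRank] <;> omega

lemma primcG_succ_d_eq_sum_primcE (k : ℕ) :
    primcG (k + 1) d =
      primcTailSeries (k + 1) b + primcE (k + 1) a + primcE (k + 1) c + primcE (k + 1) d := by
  rw [primcG_eq_add_primcE (k' := k + 1) (x' := c) (by simp [primcRank]),
    primcG_eq_add_primcE (k' := k + 1) (x' := b) (by simp [primcRank]),
    primcG_eq_add_primcE (k' := k + 1) (x' := a) (by simp [primcRank]),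
    primcG_eq_add_primcE (k' := k) (x' := d) (by simp [primcRank]; omega), primcTailSeries_b]
  ring

lemma primcG_succ_succ_d_by_colour (k : ℕ) :
    primcG (k + 2) d =
      invOfUnit (1 - X ^ (k + 2)) 1 * primcG (k + 1) d +
        C (MvPolynomial.X 0) * X ^ (k + 2) * invOfUnit (1 - X ^ (k + 1)) 1 * primcG k d +
        (C (MvPolynomial.X 1) + C (MvPolynomial.X 2)) * X ^ (k + 2) *
          primcTailSeries (k + 2) d := by
  rw [primcG_succ_d_eq_sum_primcE, primcTailSeries_b_eq_invOfUnit_mul,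
    primcE_eq_C_mul_X_pow_mul _ a (by omega), primcTailSeries_a, primcTailSeries_b_eq_invOfUnit_mul,
    primcE_eq_C_mul_X_pow_mul _ c (by omega), primcTailSeries_c,
    primcE_eq_C_mul_X_pow_mul _ d (by omega)]
  simp only [colourWeight]
  ring

lemma primcG_succ_succ_d_by_tail (k : ℕ) :
    primcG (k + 2) d =
      (1 + C (MvPolynomial.X 2) * X ^ (k + 2)) * primcTailSeries (k + 2) d +
        X ^ (k + 2) * invOfUnit (1 - X ^ (k + 2)) 1 * primcG (k + 1) d +
        C (MvPolynomial.X 2) * X ^ (k + 1) * primcTailSeries (k + 1) d := by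
  rw [primcG_eq_add_primcE (k' := k + 2) (x' := c) (by simp [primcRank]), primcG_succ_c_eq,
    primcE_eq_C_mul_X_pow_mul _ b (by omega), primcTailSeries_b_eq_invOfUnit_mul,
    primcE_eq_C_mul_X_pow_mul (k + 1) d (by omega), primcE_eq_C_mul_X_pow_mul (k + 2) d (by omega)]
  simp only [colourWeight, map_one]
  ring

open PowerSeries in
/-- The q-difference equation satisfied by the G_{k_d}, for k ≥ 3:
(1 − c q^k) G_{k_d} = ((1 − c q^{2k})/(1 − q^k)) G_{(k−1)_d}
+ ((a q^k + d q^k + a d q^{2k})/(1 − q^{k−1})) G_{(k−2)_d}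
+ (a d q^{2k−1}/(1 − q^{k−2})) G_{(k−3)_d},
where 1/(1 − q^j) denotes the inverse of 1 − q^j in the formal power series ring. -/
theorem primcG_qdiff (k : ℕ) (hk : 3 ≤ k) :
    (1 - C (R := PrimcRing) (MvPolynomial.X 1) * (X : PowerSeries PrimcRing) ^ k) * primcG k d =
      (1 - C (R := PrimcRing) (MvPolynomial.X 1) * X ^ (2 * k)) *
          PowerSeries.invOfUnit (1 - (X : PowerSeries PrimcRing) ^ k) 1 *
          primcG (k - 1) d +
        (C (R := PrimcRing) (MvPolynomial.X 0) * X ^ k + C (R := PrimcRing) (MvPolynomial.X 2) * X ^ k +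
              C (R := PrimcRing) (MvPolynomial.X 0) * C (R := PrimcRing) (MvPolynomial.X 2) * X ^ (2 * k)) *
          PowerSeries.invOfUnit (1 - (X : PowerSeries PrimcRing) ^ (k - 1)) 1 *
          primcG (k - 2) d +
        C (R := PrimcRing) (MvPolynomial.X 0) * C (R := PrimcRing) (MvPolynomial.X 2) * X ^ (2 * k - 1) *
          PowerSeries.invOfUnit (1 - (X : PowerSeries PrimcRing) ^ (k - 2)) 1 *
          primcG (k - 3) d := by
  obtain ⟨m, rfl⟩ : ∃ m, k = m + 3 := ⟨k - 3, by omega⟩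
  have hG₃ := primcG_succ_succ_d_by_colour (m + 1)
  have hG₂ := primcG_succ_succ_d_by_colour m
  have hT₃ := primcG_succ_succ_d_by_tail (m + 1)
  simp only [show m + 1 + 2 = m + 3 from rfl, show m + 1 + 1 = m + 2 from rfl] at hG₃ hT₃
  rw [show 2 * (m + 3) - 1 = m + 3 + (m + 2) by omega, show m + 3 - 1 = m + 2 from rfl,
    show m + 3 - 2 = m + 1 from rfl, show m + 3 - 3 = m from rfl, two_mul]
  linear_combination (1 + C (MvPolynomial.X 2) * X ^ (m + 3)) * hG₃ +
    C (MvPolynomial.X 2) * X ^ (m + 3) * hG₂ -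
    (C (MvPolynomial.X 1) + C (MvPolynomial.X 2)) * X ^ (m + 3) * hT₃ +
    C (MvPolynomial.X 2) * X ^ (m + 3) * primcG (m + 2) d *
      one_sub_X_pow_mul_invOfUnit (R := PrimcRing) (j := m + 3) (by omega)
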